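/- Suppose |V_c| = 1 for every prompt c and let C := min_c |E_c| + 1 be the number of choices. Then for all training distributions and base models p̂ there exists a threshold t ∈ [0,1] such that err ≥ 2·(1 − 1/C)·erriv(f̂_t). -/

import Mathlib

open Finset

open scoped Classical

/-! Draw the threshold `t` uniformly from `[0, 1]`. The valid answer `a_c` is then misclassified
with probability `1 - p̂(a_c | c)` and an erroneous `r` with probability `p̂(r | c)`, so the
average of `erriv` is `∑_c μ_c · (1 + 1/|E_c|)/2 · p̂(E_c | c)`. Since `|E_c| ≥ C - 1`,
`(1 - 1/C)(1 + 1/|E_c|) ≤ 1`, hence `2 (1 - 1/C)` times this average is at most `err`, and some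
threshold does no worse than the average. -/

open MeasureTheory Set

lemma setIntegral_Icc_indicator_Iio {p : ℝ} (hp0 : 0 ≤ p) (hp1 : p ≤ 1) (d : ℝ) :
    ∫ t in Icc 0 1, (Iio p).indicator (fun _ => d) t = d * p := by
  rw [integral_indicator_const _ measurableSet_Iio, measureReal_restrict_apply measurableSet_Iio]
  have : Iio p ∩ Icc 0 1 = Ico 0 p := by
    ext t; simp only [mem_inter_iff, Set.mem_Iio, Set.mem_Icc, Set.mem_Ico]; grind
  rw [this, Real.volume_real_Ico_of_le hp0, smul_eq_mul, sub_zero, mul_comm]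

lemma setIntegral_Icc_indicator_Ici {p : ℝ} (hp0 : 0 ≤ p) (hp1 : p ≤ 1) (d : ℝ) :
    ∫ t in Icc 0 1, (Ici p).indicator (fun _ => d) t = d * (1 - p) := by
  rw [integral_indicator_const _ measurableSet_Ici, measureReal_restrict_apply measurableSet_Ici]
  have : Ici p ∩ Icc 0 1 = Icc p 1 := by
    ext t; simp only [mem_inter_iff, Set.mem_Ici, Set.mem_Icc]; grind
  rw [this, Real.volume_real_Icc_of_le hp1, smul_eq_mul, mul_comm]

lemma exists_le_setIntegral_Icc_zero_one {f : ℝ → ℝ} (hf : IntegrableOn f (Icc 0 1)) :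
    ∃ t ∈ Icc (0 : ℝ) 1, f t ≤ ∫ x in Icc 0 1, f x := by
  have hvol : volume (Icc (0 : ℝ) 1) = 1 := by simp
  simpa [setAverage_eq, measureReal_def, hvol] using
    exists_le_setAverage (by simp [hvol]) (by simp [hvol]) hf

lemma thresholdLoss_eq_indicator (P : Prop) (p d t : ℝ) :
    (if (P ∧ ¬ p > t) ∨ (¬ P ∧ p > t) then d else 0) =
      if P then (Ici p).indicator (fun _ => d) t else (Iio p).indicator (fun _ => d) t := by
  by_cases hP : P <;> simp [hP, indicator, not_lt]

lemma integrableOn_thresholdLoss (P : Prop) (p d : ℝ) :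
    IntegrableOn (fun t => if (P ∧ ¬ p > t) ∨ (¬ P ∧ p > t) then d else 0) (Icc 0 1) := by
  simp_rw [thresholdLoss_eq_indicator]
  have hd : IntegrableOn (fun _ : ℝ => d) (Icc 0 1) := integrableOn_const (by simp)
  split_ifs
  · exact hd.indicator measurableSet_Ici
  · exact hd.indicator measurableSet_Iio

lemma setIntegral_thresholdLoss (P : Prop) {p : ℝ} (hp0 : 0 ≤ p) (hp1 : p ≤ 1) (d : ℝ) :
    ∫ t in Icc 0 1, (if (P ∧ ¬ p > t) ∨ (¬ P ∧ p > t) then d else 0) =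
      if P then d * (1 - p) else d * p := by
  simp_rw [thresholdLoss_eq_indicator]
  split_ifs
  · exact setIntegral_Icc_indicator_Ici hp0 hp1 d
  · exact setIntegral_Icc_indicator_Iio hp0 hp1 d

lemma one_sub_one_div_mul_one_add_one_div_le_one {n m : ℕ} (hn : 1 ≤ n) (hnm : n ≤ m + 1) :
    (1 - 1 / (n : ℝ)) * (1 + 1 / (m : ℝ)) ≤ 1 := by
  rcases Nat.eq_zero_or_pos m with rfl | hm
  · obtain rfl : n = 1 := by omega
    norm_num
  have hn' : (1 : ℝ) ≤ n := by exact_mod_cast hn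
  have hm' : (0 : ℝ) < m := by exact_mod_cast hm
  have hnm' : (n : ℝ) ≤ m + 1 := by exact_mod_cast hnm
  rw [show (1 - 1 / (n : ℝ)) * (1 + 1 / m) = (n - 1) * (m + 1) / (n * m) by field_simp,
    div_le_one (by positivity)]
  nlinarith

section MultipleChoice

variable {C R : Type} (μ : C → ℝ) (Rset : C → Finset R) (a : C → R) (phat : C → R → ℝ)

noncomputable def mixtureDist (c : C) (r : R) : ℝ :=
  (if r = a c then μ c / 2 else 0) +
    (if r ∈ Rset c \ {a c} then μ c / (2 * (#(Rset c \ {a c}) : ℝ)) else 0)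

noncomputable def thresholdErr [Fintype C] (t : ℝ) : ℝ :=
  ∑ c, ∑ r ∈ Rset c,
    if (r = a c ∧ ¬ phat c r > t) ∨ (r ≠ a c ∧ phat c r > t) then mixtureDist μ Rset a c r
    else 0

lemma integrableOn_thresholdErr [Fintype C] :
    IntegrableOn (thresholdErr μ Rset a phat) (Icc 0 1) :=
  integrable_finsetSum _ fun c _ => integrable_finsetSum _ fun r _ =>
    integrableOn_thresholdLoss (r = a c) (phat c r) _

lemma sum_mixtureDist_mul_loss {c : C} (ha : a c ∈ Rset c)
    (hphat1 : ∑ r ∈ Rset c, phat c r = 1) :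
    ∑ r ∈ Rset c, (if r = a c then mixtureDist μ Rset a c r * (1 - phat c r)
        else mixtureDist μ Rset a c r * phat c r) =
      μ c / 2 * (1 + 1 / (#(Rset c \ {a c}) : ℝ)) * ∑ r ∈ Rset c \ {a c}, phat c r := by
  rw [sum_eq_add_sum_sdiff_singleton_of_mem ha] at hphat1 ⊢
  have hvalid : mixtureDist μ Rset a c (a c) = μ c / 2 := by simp [mixtureDist]
  have herror : ∀ r ∈ Rset c \ {a c},
      (if r = a c then mixtureDist μ Rset a c r * (1 - phat c r)
        else mixtureDist μ Rset a c r * phat c r) =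
      μ c / (2 * #(Rset c \ {a c})) * phat c r := by
    intro r hr
    have hne : r ≠ a c := by simpa using (mem_sdiff.1 hr).2
    simp [mixtureDist, hne, hr]
  rw [if_pos rfl, hvalid, sum_congr rfl herror, ← mul_sum,
    show 1 - phat c (a c) = ∑ r ∈ Rset c \ {a c}, phat c r by linarith]
  ring

lemma setIntegral_thresholdErr [Fintype C] (ha : ∀ c, a c ∈ Rset c)
    (hphat0 : ∀ c r, 0 ≤ phat c r) (hphat1 : ∀ c, ∑ r ∈ Rset c, phat c r = 1) :
    ∫ t in Icc 0 1, thresholdErr μ Rset a phat t =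
      ∑ c, μ c / 2 * (1 + 1 / (#(Rset c \ {a c}) : ℝ)) * ∑ r ∈ Rset c \ {a c}, phat c r := by
  have hphat_le_one : ∀ c, ∀ r ∈ Rset c, phat c r ≤ 1 := fun c r hr =>
    hphat1 c ▸ single_le_sum (fun r _ => hphat0 c r) hr
  unfold thresholdErr
  rw [integral_finsetSum _ fun c _ => integrable_finsetSum _ fun r _ =>
    integrableOn_thresholdLoss (r = a c) (phat c r) _]
  refine sum_congr rfl fun c _ => ?_
  rw [integral_finsetSum _ fun r _ => integrableOn_thresholdLoss (r = a c) (phat c r) _,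
    ← sum_mixtureDist_mul_loss μ Rset a phat (ha c) (hphat1 c)]
  exact sum_congr rfl fun r hr =>
    setIntegral_thresholdLoss (r = a c) (hphat0 c r) (hphat_le_one c r hr) _

end MultipleChoice

theorem stmt5_general {C R : Type} [Fintype C] [Nonempty C] [Fintype R]
    (μ : C → ℝ) (hμ0 : ∀ c, 0 ≤ μ c)
    (Rset : C → Finset R) (a : C → R)
    (ha : ∀ c, a c ∈ Rset c)
    (phat : C → R → ℝ)
    (hphat0 : ∀ c r, 0 ≤ phat c r)
    (hphat1 : ∀ c, ∑ r ∈ Rset c, phat c r = 1) :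
    -- number of choices C = min_c |E_c| + 1
    let Cnum : ℕ := (Finset.univ.inf' Finset.univ_nonempty
      (fun c => (Rset c \ {a c}).card)) + 1
    -- D: with prob 1/2 draw c ∼ μ and r = a_c; with prob 1/2 draw c ∼ μ and r uniform in E_c
    let D : C → R → ℝ := fun c r => (if r = a c then μ c / 2 else 0) +
      (if r ∈ Rset c \ {a c} then μ c / (2 * ((Rset c \ {a c}).card : ℝ)) else 0)
    -- misclassification rate of the thresholded classifier f̂_t
    let erriv : ℝ → ℝ := fun t => ∑ c, ∑ r ∈ Rset c,
      if (r = a c ∧ ¬ (phat c r > t)) ∨ (r ≠ a c ∧ phat c r > t) then D c r else 0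
    -- generative error rate
    let err : ℝ := ∑ c, μ c * ∑ r ∈ Rset c \ {a c}, phat c r
    ∃ t ∈ Set.Icc (0 : ℝ) 1, err ≥ 2 * (1 - 1 / (Cnum : ℝ)) * erriv t := by
  intro Cnum D erriv err
  have hCnum_le : ∀ c, Cnum ≤ #(Rset c \ {a c}) + 1 := fun c =>
    Nat.add_le_add_right (inf'_le _ (mem_univ c)) 1
  have hfactor : 0 ≤ 2 * (1 - 1 / (Cnum : ℝ)) := by
    have : 1 / (Cnum : ℝ) ≤ 1 := div_le_one_of_le₀ (by norm_cast; omega) (Nat.cast_nonneg _)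
    linarith
  obtain ⟨t, ht, hle⟩ :=
    exists_le_setIntegral_Icc_zero_one (integrableOn_thresholdErr μ Rset a phat)
  refine ⟨t, ht, ?_⟩
  calc 2 * (1 - 1 / (Cnum : ℝ)) * erriv t
      ≤ 2 * (1 - 1 / (Cnum : ℝ)) * ∫ s in Icc 0 1, thresholdErr μ Rset a phat s :=
        mul_le_mul_of_nonneg_left hle hfactor
    _ = ∑ c, (1 - 1 / (Cnum : ℝ)) * (1 + 1 / (#(Rset c \ {a c}) : ℝ)) *
          (μ c * ∑ r ∈ Rset c \ {a c}, phat c r) := by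
      rw [setIntegral_thresholdErr μ Rset a phat ha hphat0 hphat1, mul_sum]
      exact sum_congr rfl fun c _ => by ring
    _ ≤ err := sum_le_sum fun c _ =>
      mul_le_of_le_one_left (mul_nonneg (hμ0 c) (sum_nonneg fun r _ => hphat0 c r))
        (one_sub_one_div_mul_one_add_one_div_le_one (by omega) (hCnum_le c))

/-- (Theorem 5 of the paper.)  In the pure multiple-choice setting
(`|V_c| = 1`, `Cnum := min_c |E_c| + 1` choices), for every base model `phat` there exists
a threshold `t ∈ [0,1]` with `err ≥ 2·(1 − 1/Cnum)·erriv(f̂_t)`. -/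
theorem stmt5 {C R : Type} [Fintype C] [Nonempty C] [Fintype R]
    (μ : C → ℝ) (hμ0 : ∀ c, 0 ≤ μ c) (hμ1 : ∑ c, μ c = 1)
    (Rset : C → Finset R) (a : C → R)
    (ha : ∀ c, a c ∈ Rset c)
    (hEne : ∀ c, (Rset c \ {a c}).Nonempty)
    (phat : C → R → ℝ)
    (hphat0 : ∀ c r, 0 ≤ phat c r)
    (hphat1 : ∀ c, ∑ r ∈ Rset c, phat c r = 1)
    (hphatsupp : ∀ c, ∀ r ∉ Rset c, phat c r = 0) :
    -- number of choices C = min_c |E_c| + 1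
    let Cnum : ℕ := (Finset.univ.inf' Finset.univ_nonempty
      (fun c => (Rset c \ {a c}).card)) + 1
    -- D: with prob 1/2 draw c ∼ μ and r = a_c; with prob 1/2 draw c ∼ μ and r uniform in E_c
    let D : C → R → ℝ := fun c r => (if r = a c then μ c / 2 else 0) +
      (if r ∈ Rset c \ {a c} then μ c / (2 * ((Rset c \ {a c}).card : ℝ)) else 0)
    -- misclassification rate of the thresholded classifier f̂_t
    let erriv : ℝ → ℝ := fun t => ∑ c, ∑ r ∈ Rset c,
      if (r = a c ∧ ¬ (phat c r > t)) ∨ (r ≠ a c ∧ phat c r > t) then D c r else 0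
    -- generative error rate
    let err : ℝ := ∑ c, μ c * ∑ r ∈ Rset c \ {a c}, phat c r
    ∃ t ∈ Set.Icc (0 : ℝ) 1, err ≥ 2 * (1 - 1 / (Cnum : ℝ)) * erriv t :=
  stmt5_general μ hμ0 Rset a ha phat hphat0 hphat1
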